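/- Let G(z) be an n×k matrix over 𝔽[z] of rank k, let C = colsp_{𝔽[z]} G(z) ⊆ 𝔽^n[z] be the 𝔽[z]-span of its columns, and let δ be the degree of C. Then there exist constant matrices K, L ∈ 𝔽^{(δ+n−k)×δ} and M ∈ 𝔽^{(δ+n−k)×n} such that C = { v(z) ∈ 𝔽^n[z] : there exists x(z) ∈ 𝔽^δ[z] with zKx(z) + Lx(z) + Mv(z) = 0 }, and moreover: (i) K has full column rank; (ii) the matrix [K M] has full row rank; (iii) the (δ+n−k)×(δ+n) polynomial matrix [zK+L | M] is left prime over 𝔽[z]. -/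

import Mathlib

open Matrix

section ConvolutionalDefs

variable {𝔽 : Type} [Field 𝔽]

/-- The left shift `(σw)_t = w_{t+1}` on bi-infinite sequences. -/
def shiftZ {A : Type} (w : ℤ → A) : ℤ → A := fun t => w (t + 1)

/-- A set of bi-infinite sequences is shift-invariant if `σX ⊆ X`. -/
def ShiftInvariant {A : Type} (X : Set (ℤ → A)) : Prop := ∀ w ∈ X, shiftZ w ∈ X

/-- A block `β` occurs in the bi-infinite sequence `w` if `β = w_j w_{j+1} … w_{j+k-1}`
for some `j ∈ ℤ`. -/
def BlockOccursIn {A : Type} (β : List A) (w : ℤ → A) : Prop :=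
  ∃ j : ℤ, ∀ l : Fin β.length, β.get l = w (j + ((l : ℕ) : ℤ))

/-- A block occurs in some element of the set `X`. -/
def OccursInSome {A : Type} (β : List A) (X : Set (ℤ → A)) : Prop :=
  ∃ w ∈ X, BlockOccursIn β w

/-- A set of sequences is irreducible if any ordered pair of blocks occurring in it can be
completed to a single block occurring in it. -/
def IrreducibleShift {A : Type} (X : Set (ℤ → A)) : Prop :=
  ∀ β γ : List A, OccursInSome β X → OccursInSome γ X →
    ∃ μ : List A, OccursInSome (β ++ μ ++ γ) X

/-- A subset of a module is `𝔽`-linear. -/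
def IsFLinearSet (𝔽 : Type) [Field 𝔽] {M : Type} [AddCommGroup M] [Module 𝔽 M]
    (C : Set M) : Prop :=
  (0 : M) ∈ C ∧ (∀ x ∈ C, ∀ y ∈ C, x + y ∈ C) ∧ ∀ (c : 𝔽), ∀ x ∈ C, c • x ∈ C

/-- A behavior `B` is complete if membership can be decided on finite windows:
any `w` which agrees on every finite interval with some element of `B` lies in `B`. -/
def CompleteBehavior {A : Type} (B : Set (ℤ → A)) : Prop :=
  ∀ w : ℤ → A, (∀ a b : ℤ, ∃ x ∈ B, ∀ t : ℤ, a ≤ t → t ≤ b → x t = w t) → w ∈ B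

/-- A behavior `B ⊆ (𝔽^n)^ℤ` is controllable if there is `ℓ ≥ 0` such that any past of a
trajectory of `B` can be concatenated, after a lag of length `ℓ`, with any future of a
trajectory of `B`. -/
def ControllableBehavior {A : Type} (B : Set (ℤ → A)) : Prop :=
  ∃ ℓ : ℕ, ∀ w ∈ B, ∀ w' ∈ B, ∀ j : ℤ, ∃ w'' ∈ B,
    (∀ t : ℤ, t ≤ j → w'' t = w t) ∧ (∀ t : ℤ, j + (ℓ : ℤ) ≤ t → w'' t = w' t)

/-- The operator `G(σ)` associated to a Laurent-polynomial matrix `G(z) = Σ_i G_i z^i`: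
`(G(σ)m)_t = Σ_i G_i m_{t+i}`. -/
noncomputable def lSigma {n k : ℕ} (G : Matrix (Fin n) (Fin k) (LaurentPolynomial 𝔽))
    (m : ℤ → Fin k → 𝔽) : ℤ → Fin n → 𝔽 :=
  fun t a => ∑ b : Fin k, (G a b).coeff.sum fun i c => c * m (t + i) b

/-- The operator `P(σ)` associated to a polynomial matrix, acting on two-sided sequences. -/
noncomputable def pSigma {n k : ℕ} (P : Matrix (Fin n) (Fin k) (Polynomial 𝔽))
    (w : ℤ → Fin k → 𝔽) : ℤ → Fin n → 𝔽 :=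
  fun t a => ∑ b : Fin k, (P a b).sum fun i c => c * w (t + (i : ℤ)) b

/-- The operator `P(σ)` associated to a polynomial matrix, acting on one-sided sequences. -/
noncomputable def pSigmaPlus {n k : ℕ} (P : Matrix (Fin n) (Fin k) (Polynomial 𝔽))
    (w : ℕ → Fin k → 𝔽) : ℕ → Fin n → 𝔽 :=
  fun t a => ∑ b : Fin k, (P a b).sum fun i c => c * w (t + i) b

/-- View a vector of formal Laurent series as a bi-infinite sequence. -/
def lsToSeq {n : ℕ} (v : Fin n → LaurentSeries 𝔽) : ℤ → Fin n → 𝔽 :=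
  fun t a => (v a).coeff t

/-- View a vector of Laurent polynomials as a (finite-support) bi-infinite sequence. -/
def lpToSeq {n : ℕ} (v : Fin n → LaurentPolynomial 𝔽) : ℤ → Fin n → 𝔽 :=
  fun t a => (v a).coeff t

/-- The pairing `(w,v) = Σ_i ⟨w_i, v_i⟩` between a bi-infinite sequence and a finite-support
(Laurent polynomial) vector. -/
noncomputable def seqPairing {n : ℕ} (w : ℤ → Fin n → 𝔽) (v : Fin n → LaurentPolynomial 𝔽) : 𝔽 :=
  ∑ a : Fin n, (v a).coeff.sum fun i c => w i a * c

/-- The `j`-th column degree of a polynomial matrix. -/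
def colDeg {n k : ℕ} (G : Matrix (Fin n) (Fin k) (Polynomial 𝔽)) (j : Fin k) : ℕ :=
  Finset.univ.sup fun i => (G i j).natDegree

/-- The `i`-th row degree of a polynomial matrix. -/
def rowDeg {r n : ℕ} (P : Matrix (Fin r) (Fin n) (Polynomial 𝔽)) (i : Fin r) : ℕ :=
  Finset.univ.sup fun j => (P i j).natDegree

/-- A polynomial `n×k` matrix is column reduced if the constant matrix of leading column
coefficients has rank `k`. -/
def ColumnReduced {n k : ℕ} (G : Matrix (Fin n) (Fin k) (Polynomial 𝔽)) : Prop :=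
  Matrix.rank (Matrix.of fun i j => (G i j).coeff (colDeg G j)) = k

/-- A polynomial `r×n` matrix is row reduced if the constant matrix of leading row
coefficients has rank `r`. -/
def RowReduced {r n : ℕ} (P : Matrix (Fin r) (Fin n) (Polynomial 𝔽)) : Prop :=
  Matrix.rank (Matrix.of fun i j => (P i j).coeff (rowDeg P i)) = r

/-- A matrix over a commutative ring is right prime if it has a left inverse over the ring. -/
def RightPrime {R : Type} [CommRing R] {m l : Type} [Fintype m] [Fintype l] [DecidableEq l]
    (G : Matrix m l R) : Prop :=
  ∃ L : Matrix l m R, L * G = 1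

/-- A matrix over a commutative ring is left prime if it has a right inverse over the ring. -/
def LeftPrime {R : Type} [CommRing R] {m l : Type} [Fintype m] [Fintype l] [DecidableEq m]
    (P : Matrix m l R) : Prop :=
  ∃ Q : Matrix l m R, P * Q = 1

end ConvolutionalDefs

/-!
Replace `G` by the column-reduced encoder `A = G U`, which spans the same module; let `κ_j` be its
column degrees and `Λ_j` its leading coefficient columns, which are linearly independent. There is
one state variable `x_{j,d}` for each `d < κ_j`, standing for `z^d u_j`. The pencil consists of the
shift rows `z x_{j,d} = x_{j,d+1}` and of the rows
`Σ_j (Σ_{d<κ_j} P A_{j,d} x_{j,d} + z P Λ_j x_{j,κ_j-1}) = P v`, where `A_{j,d}` is the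
coefficient of `z^d` in column `j` and `P` is a surjective constant matrix whose kernel is spanned
by the constant columns `Λ_j` (`κ_j = 0`). The shift rows force `x_{j,d} = z^d u_j`, and then the other
rows say `P (A u) = P v`: every coefficient of `v - A u` lies in the span of the constant columns,
which is exactly `v ∈ colsp A`. `K` is injective because the `Λ_j` are independent; `[K M]` and
`[zK + L | M]` are block lower triangular with surjective diagonal blocks, hence surjective, and a
surjective matrix over `𝔽[z]` has a right inverse. There are
`Σ_j (κ_j - 1)_+ + n - #{j | κ_j = 0} = δ + n - k` rows.
-/

open Polynomial

section MatrixFacts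

variable {R : Type*} [CommRing R]

theorem Matrix.mem_span_range_transpose_iff {m n : Type*} [Fintype n] (A : Matrix m n R)
    (v : m → R) : v ∈ Submodule.span R (Set.range Aᵀ) ↔ ∃ u, A *ᵥ u = v := by
  change v ∈ Submodule.span R (Set.range A.col) ↔ _
  rw [← Matrix.range_mulVecLin]
  rfl

theorem Matrix.span_range_transpose_mul_of_isUnit {m n : Type*} [Fintype n] [DecidableEq n]
    (A : Matrix m n R) {U : Matrix n n R} (hU : IsUnit U) :
    Submodule.span R (Set.range (A * U)ᵀ) = Submodule.span R (Set.range Aᵀ) := by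
  have hUsurj : LinearMap.range U.mulVecLin = ⊤ :=
    LinearMap.range_eq_top.mpr (Matrix.mulVec_surjective_iff_isUnit.mpr hU)
  change Submodule.span R (Set.range (A * U).col) = Submodule.span R (Set.range A.col)
  rw [← Matrix.range_mulVecLin, ← Matrix.range_mulVecLin, Matrix.mulVecLin_mul,
    LinearMap.range_comp_of_range_eq_top _ hUsurj]

theorem Matrix.mulVec_surjective_fromBlocks_zero {m₁ m₂ n₁ n₂ : Type*} [Fintype n₁] [Fintype n₂]
    {S : Matrix m₁ n₁ R} (T : Matrix m₂ n₁ R) {D : Matrix m₂ n₂ R}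
    (hS : Function.Surjective S.mulVec) (hD : Function.Surjective D.mulVec) :
    Function.Surjective (Matrix.fromBlocks S 0 T D).mulVec := by
  intro y
  obtain ⟨x₁, hx₁⟩ := hS (y ∘ Sum.inl)
  obtain ⟨x₂, hx₂⟩ := hD (y ∘ Sum.inr - T *ᵥ x₁)
  refine ⟨Sum.elim x₁ x₂, ?_⟩
  ext (i | i) <;> simp [Matrix.fromBlocks_mulVec, hx₁, hx₂]

theorem Matrix.mulVec_surjective_neg {m n : Type*} [Fintype n] {A : Matrix m n R}
    (h : Function.Surjective A.mulVec) : Function.Surjective (-A).mulVec := fun y => by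
  obtain ⟨x, hx⟩ := h (-y)
  exact ⟨x, by rw [Matrix.neg_mulVec, hx, neg_neg]⟩

theorem Matrix.mulVec_surjective_map {S : Type*} [CommRing S] {m n : Type*} [Fintype m]
    [DecidableEq m] [Fintype n] (f : R →+* S) {A : Matrix m n R}
    (h : Function.Surjective A.mulVec) : Function.Surjective (A.map f).mulVec := by
  obtain ⟨B, hB⟩ := Matrix.mulVec_surjective_iff_exists_right_inverse.mp h
  exact Matrix.mulVec_surjective_iff_exists_right_inverse.mpr
    ⟨B.map f, by rw [← Matrix.map_mul, hB, Matrix.map_one _ f.map_zero f.map_one]⟩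

end MatrixFacts

section LeftPrime

variable {R : Type} [CommRing R] {m l : Type} [Fintype m] [Fintype l] [DecidableEq m]

theorem Matrix.leftPrime_iff_mulVec_surjective (A : Matrix m l R) :
    LeftPrime A ↔ Function.Surjective A.mulVec :=
  Matrix.mulVec_surjective_iff_exists_right_inverse.symm

theorem LeftPrime.reindex {m' l' : Type} [Fintype m'] [Fintype l'] [DecidableEq m']
    {A : Matrix m l R} (h : LeftPrime A) (e : m ≃ m') (f : l ≃ l') :
    LeftPrime (Matrix.reindex e f A) := by
  obtain ⟨Q, hQ⟩ := h
  refine ⟨Matrix.reindex f e Q, ?_⟩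
  rw [Matrix.reindex_apply, Matrix.reindex_apply, Matrix.submatrix_mul_equiv, hQ,
    Matrix.submatrix_one_equiv]

end LeftPrime

section FieldFacts

variable {𝔽 : Type*} [Field 𝔽]

theorem Matrix.rank_eq_card_of_injective {m n : Type*} [Fintype m] [Fintype n]
    {A : Matrix m n 𝔽} (h : Function.Injective A.mulVec) : A.rank = Fintype.card n := by
  rw [Matrix.rank, LinearMap.finrank_range_of_inj h, Module.finrank_fintype_fun_eq_card]

theorem Matrix.rank_eq_card_of_surjective {m n : Type*} [Fintype m] [Fintype n]
    {A : Matrix m n 𝔽} (h : Function.Surjective A.mulVec) : A.rank = Fintype.card m := by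
  rw [Matrix.rank, LinearMap.range_eq_top.mpr h, finrank_top, Module.finrank_fintype_fun_eq_card]

theorem Submodule.exists_mulVec_surjective_ker_eq {n : ℕ} (W : Submodule 𝔽 (Fin n → 𝔽)) :
    ∃ P : Matrix (Fin (n - Module.finrank 𝔽 W)) (Fin n) 𝔽,
      Function.Surjective P.mulVec ∧ ∀ v, P *ᵥ v = 0 ↔ v ∈ W := by
  have hquot : Module.finrank 𝔽 ((Fin n → 𝔽) ⧸ W) =
      Module.finrank 𝔽 (Fin (n - Module.finrank 𝔽 W) → 𝔽) := by
    have := W.finrank_quotient_add_finrank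
    rw [Module.finrank_fin_fun] at this ⊢
    omega
  let f := (LinearEquiv.ofFinrankEq _ _ hquot).toLinearMap ∘ₗ W.mkQ
  have hf : (LinearMap.toMatrix' f).mulVec = f := funext (LinearMap.toMatrix'_mulVec f)
  refine ⟨LinearMap.toMatrix' f, ?_, fun v => ?_⟩
  · rw [hf]
    exact (LinearEquiv.surjective _).comp W.mkQ_surjective
  · simp [f, Submodule.Quotient.mk_eq_zero]

theorem LinearIndependent.eq_zero_of_sum_mem_span_image {ι V : Type*} [Fintype ι] [AddCommGroup V]
    [Module 𝔽 V] {v : ι → V} (hv : LinearIndependent 𝔽 v) {s : Set ι} {y : ι → 𝔽}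
    (hy : ∀ j ∈ s, y j = 0) (hmem : ∑ j, y j • v j ∈ Submodule.span 𝔽 (v '' s)) : y = 0 := by
  obtain ⟨l, hl, hsum⟩ := (Finsupp.mem_span_image_iff_linearCombination 𝔽).mp hmem
  have hyl : y = l := by
    refine hv.fintypeLinearCombination_injective ?_
    rw [Fintype.linearCombination_apply, Fintype.linearCombination_apply, ← hsum,
      Finsupp.linearCombination_apply]
    exact Finsupp.sum_fintype _ _ fun _ => zero_smul _ _
  funext j
  by_cases hj : j ∈ s
  · exact hy j hj
  · rw [hyl]
    exact (Finsupp.mem_supported' 𝔽 l).mp hl j hj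

end FieldFacts

theorem Fintype.sum_sub_one_add_card {ι : Type*} [Fintype ι] (κ : ι → ℕ) :
    ∑ j, (κ j - 1) + Fintype.card ι = ∑ j, κ j + Fintype.card {j // κ j = 0} := by
  rw [Fintype.card_subtype, Finset.card_filter, Fintype.card_eq_sum_ones, ← Finset.sum_add_distrib,
    ← Finset.sum_add_distrib]
  exact Finset.sum_congr rfl fun j _ => by split_ifs <;> omega

section PolynomialFacts

variable {R : Type*} [CommSemiring R]

theorem Fin.sum_pencil_mul_pow (x : R) (p : ℕ → R) (κ : ℕ) (h0 : κ = 0 → p 0 = 0) :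
    ∑ d : Fin κ, (x * (if (d : ℕ) + 1 = κ then p κ else 0) + p d) * x ^ (d : ℕ) =
      ∑ d ∈ Finset.range (κ + 1), p d * x ^ d := by
  cases κ with
  | zero => simp [h0]
  | succ κ =>
    rw [Fin.sum_univ_eq_sum_range (fun d => (x * (if d + 1 = κ + 1 then p (κ + 1) else 0) + p d) *
      x ^ d), Finset.sum_range_succ _ (κ + 1)]
    simp only [add_mul, Finset.sum_add_distrib, add_left_inj]
    rw [Finset.sum_range_succ, Finset.sum_eq_zero fun d hd => by
      rw [if_neg (by simp at hd; omega), mul_zero, zero_mul]]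
    simp [pow_succ]
    ring

theorem Polynomial.coeff_map_C_mul_apply {m n ι : Type*} [Fintype n] (P : Matrix m n R)
    (A : Matrix n ι R[X]) (r : m) (j : ι) (d : ℕ) :
    ((P.map C * A) r j).coeff d = (P * A.map (·.coeff d)) r j := by
  simp [Matrix.mul_apply]

theorem Polynomial.natDegree_map_C_mul_apply_le {m n ι : Type*} [Fintype n] (P : Matrix m n R)
    {A : Matrix n ι R[X]} {j : ι} {κ : ℕ} (hA : ∀ a, (A a j).natDegree ≤ κ) (r : m) :
    ((P.map C * A) r j).natDegree ≤ κ :=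
  natDegree_sum_le_of_forall_le _ _ fun a _ => (natDegree_C_mul_le _ _).trans (hA a)

theorem Polynomial.coeff_map_C_mulVec_apply {m n : Type*} [Fintype n] (P : Matrix m n R)
    (w : n → R[X]) (r : m) (d : ℕ) :
    ((P.map C *ᵥ w) r).coeff d = (P *ᵥ fun i => (w i).coeff d) r := by
  simp [Matrix.mulVec, dotProduct]

theorem Polynomial.mem_span_range_map_C_of_coeff_mem {ι τ : Type*} [Fintype ι] [Fintype τ]
    (b : τ → ι → R) {w : ι → R[X]}
    (hw : ∀ d, (fun i => (w i).coeff d) ∈ Submodule.span R (Set.range b)) :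
    w ∈ Submodule.span R[X] (Set.range fun t i => C (b t i)) := by
  set N := Finset.univ.sup (fun i => (w i).natDegree) + 1
  have hw_eq : w = ∑ d ∈ Finset.range N, (X : R[X]) ^ d • fun i => C ((w i).coeff d) := by
    ext1 i
    simp only [Finset.sum_apply, Pi.smul_apply, smul_eq_mul]
    simp_rw [mul_comm (X ^ _)]
    exact as_sum_range_C_mul_X_pow' (w i)
      (Nat.lt_succ_of_le (Finset.le_sup (f := fun i => (w i).natDegree) (Finset.mem_univ i)))
  rw [hw_eq]
  refine Submodule.sum_mem _ fun d _ => Submodule.smul_mem _ _ ?_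
  obtain ⟨c, hc⟩ := (Submodule.mem_span_range_iff_exists_fun R).mp (hw d)
  have hC : (fun i => C ((w i).coeff d)) = ∑ t, C (c t) • fun i => C (b t i) := by
    ext1 i
    have hci := congrFun hc i
    simp only [Finset.sum_apply, Pi.smul_apply, smul_eq_mul] at hci ⊢
    simp [← hci, map_sum]
  rw [hC]
  exact Submodule.sum_mem _ fun t _ => Submodule.smul_mem _ _ (Submodule.subset_span ⟨t, rfl⟩)

end PolynomialFacts

theorem exists_seq_mul_sub_succ_eq {R : Type*} [Ring R] (a : R) (y : ℕ → R) :
    ∃ f : ℕ → R, ∀ d, a * f d - f (d + 1) = y d :=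
  ⟨fun d => Nat.rec 0 (fun d fd => a * fd - y d) d, fun d => by simp⟩

section ShiftRows

variable {ι : Type*} [DecidableEq ι] (κ : ι → ℕ)

def lowerState (r : Σ j, Fin (κ j - 1)) : Σ j, Fin (κ j) :=
  ⟨r.1, Fin.castLE (Nat.sub_le _ _) r.2⟩

def upperState (r : Σ j, Fin (κ j - 1)) : Σ j, Fin (κ j) :=
  ⟨r.1, ⟨r.2 + 1, Nat.add_lt_of_lt_sub r.2.2⟩⟩

-- `κ j - 1` truncates, so a column with `κ j = 0` has neither states nor shift rows.
def shiftRows {R : Type*} [Ring R] (a b : R) :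
    Matrix (Σ j, Fin (κ j - 1)) (Σ j, Fin (κ j)) R :=
  Matrix.of fun r s => (if s = lowerState κ r then a else 0) - (if s = upperState κ r then b else 0)

section Ring

variable {R : Type*} [Ring R]

theorem map_shiftRows {S : Type*} [Ring S] (f : R →+* S) (a b : R) :
    (shiftRows κ a b).map f = shiftRows κ (f a) (f b) := by
  ext r s
  simp [shiftRows, apply_ite f]

theorem smul_shiftRows_add_shiftRows (c a b a' b' : R) :
    c • shiftRows κ a b + shiftRows κ a' b' = shiftRows κ (c * a + a') (c * b + b') := by
  ext r s
  simp only [shiftRows, Matrix.add_apply, Matrix.smul_apply, Matrix.of_apply, smul_eq_mul]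
  split_ifs <;> noncomm_ring

variable [Fintype ι]

theorem shiftRows_mulVec (a b : R) (x : (Σ j, Fin (κ j)) → R) (r : Σ j, Fin (κ j - 1)) :
    (shiftRows κ a b *ᵥ x) r = a * x (lowerState κ r) - b * x (upperState κ r) := by
  simp [shiftRows, Matrix.mulVec, dotProduct, sub_mul, ite_mul, Finset.sum_sub_distrib]

theorem shiftRows_one_zero_mulVec_surjective :
    Function.Surjective (shiftRows κ (1 : R) 0).mulVec := by
  intro y
  refine ⟨fun s => if h : (s.2 : ℕ) + 1 < κ s.1 then y ⟨s.1, ⟨s.2, by omega⟩⟩ else 0, ?_⟩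
  ext r
  rw [shiftRows_mulVec, dif_pos (by simpa [lowerState] using Nat.add_lt_of_lt_sub r.2.2)]
  simp [lowerState]

theorem shiftRows_mulVec_surjective (a : R) : Function.Surjective (shiftRows κ a 1).mulVec := by
  intro y
  choose f hf using fun j => exists_seq_mul_sub_succ_eq a
    fun d => if h : d < κ j - 1 then y ⟨j, ⟨d, h⟩⟩ else 0
  refine ⟨fun s => f s.1 s.2, ?_⟩
  ext r
  rw [shiftRows_mulVec, one_mul]
  simpa [lowerState, upperState, r.2.2] using hf r.1 r.2

end Ring

variable [Fintype ι] in
theorem shiftRows_mulVec_eq_zero_iff {R : Type*} [CommRing R] (a : R) (x : (Σ j, Fin (κ j)) → R) :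
    shiftRows κ a 1 *ᵥ x = 0 ↔ ∃ u : ι → R, x = fun s => a ^ (s.2 : ℕ) * u s.1 := by
  constructor
  · intro hx
    have hstep : ∀ r, x (upperState κ r) = a * x (lowerState κ r) := fun r => by
      have := congrFun hx r
      rw [shiftRows_mulVec, one_mul, Pi.zero_apply, sub_eq_zero] at this
      exact this.symm
    have hpow : ∀ j d (hd : d < κ j), x ⟨j, ⟨d, hd⟩⟩ = a ^ d * x ⟨j, ⟨0, by omega⟩⟩ := by
      intro j d
      induction d with
      | zero => simp
      | succ d ih =>
        intro hd
        rw [pow_succ', mul_assoc, ← ih (by omega)]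
        exact hstep ⟨j, ⟨d, by omega⟩⟩
    refine ⟨fun j => if h : 0 < κ j then x ⟨j, ⟨0, h⟩⟩ else 0, funext fun s => ?_⟩
    dsimp only
    rw [dif_pos s.2.pos]
    exact hpow s.1 s.2 s.2.2
  · rintro ⟨u, rfl⟩
    ext r
    simp [shiftRows_mulVec, lowerState, upperState, pow_succ]
    ring

end ShiftRows

section Pencil

variable {𝔽 : Type} [Field 𝔽] {ν ι m : Type}

def leadCoeffs (A : Matrix ν ι 𝔽[X]) (κ : ι → ℕ) (j : ι) (a : ν) : 𝔽 := (A a j).coeff (κ j)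

def constraintK [Fintype ν] (A : Matrix ν ι 𝔽[X]) (κ : ι → ℕ) (P : Matrix m ν 𝔽) :
    Matrix m (Σ j, Fin (κ j)) 𝔽 :=
  Matrix.of fun r s => if (s.2 : ℕ) + 1 = κ s.1 then (P * A.map (·.coeff (κ s.1))) r s.1 else 0

def constraintL [Fintype ν] (A : Matrix ν ι 𝔽[X]) (κ : ι → ℕ) (P : Matrix m ν 𝔽) :
    Matrix m (Σ j, Fin (κ j)) 𝔽 :=
  Matrix.of fun r s => (P * A.map (·.coeff s.2)) r s.1

def pencilK [Fintype ν] [DecidableEq ι] (A : Matrix ν ι 𝔽[X]) (κ : ι → ℕ) (P : Matrix m ν 𝔽) :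
    Matrix ((Σ j, Fin (κ j - 1)) ⊕ m) (Σ j, Fin (κ j)) 𝔽 :=
  Matrix.fromRows (shiftRows κ 1 0) (constraintK A κ P)

def pencilL [Fintype ν] [DecidableEq ι] (A : Matrix ν ι 𝔽[X]) (κ : ι → ℕ) (P : Matrix m ν 𝔽) :
    Matrix ((Σ j, Fin (κ j - 1)) ⊕ m) (Σ j, Fin (κ j)) 𝔽 :=
  Matrix.fromRows (shiftRows κ 0 1) (constraintL A κ P)

def pencilM (κ : ι → ℕ) (P : Matrix m ν 𝔽) : Matrix ((Σ j, Fin (κ j - 1)) ⊕ m) ν 𝔽 :=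
  Matrix.fromRows 0 (-P)

variable {A : Matrix ν ι 𝔽[X]} {κ : ι → ℕ} {P : Matrix m ν 𝔽}

theorem map_C_leadCoeffs_eq_transpose (hA : ∀ a j, (A a j).natDegree ≤ κ j) {j : ι}
    (hj : κ j = 0) : (fun a => C (leadCoeffs A κ j a)) = Aᵀ j := by
  funext a
  rw [leadCoeffs, hj, Matrix.transpose_apply, ← eq_C_of_natDegree_le_zero (hj ▸ hA a j)]

theorem fromCols_pencil_eq_fromBlocks [Fintype ν] [DecidableEq ι] :
    Matrix.fromCols ((X : 𝔽[X]) • (pencilK A κ P).map C + (pencilL A κ P).map C)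
        ((pencilM κ P).map C) =
      Matrix.fromBlocks (shiftRows κ (X : 𝔽[X]) 1) 0
        ((X : 𝔽[X]) • (constraintK A κ P).map C + (constraintL A κ P).map C) (-P.map C) := by
  have hshift : shiftRows κ (X : 𝔽[X]) 1 = (X : 𝔽[X]) • shiftRows κ 1 0 + shiftRows κ 0 1 := by
    rw [smul_shiftRows_add_shiftRows, mul_one, mul_zero, add_zero, zero_add]
  simp only [pencilK, pencilL, pencilM, Matrix.fromRows_map, map_shiftRows, map_one, map_zero,
    hshift]
  refine Matrix.ext fun i j => ?_
  rcases i with i | i <;> rcases j with j | j <;> simp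

theorem constraint_mulVec_powers [Fintype ν] [Fintype ι] (hA : ∀ a j, (A a j).natDegree ≤ κ j)
    (hP : ∀ j, κ j = 0 → ∀ r, (P * A.map (·.coeff 0)) r j = 0) (u : ι → 𝔽[X]) :
    ((X : 𝔽[X]) • (constraintK A κ P).map C + (constraintL A κ P).map C) *ᵥ
        (fun s => X ^ (s.2 : ℕ) * u s.1) = (P.map C * A) *ᵥ u := by
  funext r
  simp only [Matrix.mulVec, dotProduct, Fintype.sum_sigma]
  refine Finset.sum_congr rfl fun j _ => ?_
  have hcol : (P.map C * A) r j =
      ∑ d ∈ Finset.range (κ j + 1), C ((P * A.map (·.coeff d)) r j) * (X : 𝔽[X]) ^ d := by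
    rw [as_sum_range_C_mul_X_pow' _ (Nat.lt_succ_of_le
      (natDegree_map_C_mul_apply_le P (fun a => hA a j) r))]
    simp only [coeff_map_C_mul_apply]
  rw [hcol, ← Fin.sum_pencil_mul_pow _ _ _ fun h => by simp [hP j h r], Finset.sum_mul]
  refine Finset.sum_congr rfl fun d _ => ?_
  simp only [constraintK, constraintL, Matrix.add_apply, Matrix.smul_apply, Matrix.map_apply,
    Matrix.of_apply, smul_eq_mul, apply_ite C, map_zero]
  ring

theorem pencil_solvable_iff [Fintype ν] [Fintype ι] [DecidableEq ι]
    (hA : ∀ a j, (A a j).natDegree ≤ κ j)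
    (hP : ∀ j, κ j = 0 → ∀ r, (P * A.map (·.coeff 0)) r j = 0) (v : ν → 𝔽[X]) :
    (∃ x, (X : 𝔽[X]) • (pencilK A κ P).map C *ᵥ x + (pencilL A κ P).map C *ᵥ x +
        (pencilM κ P).map C *ᵥ v = 0) ↔ ∃ u, (P.map C * A) *ᵥ u = P.map C *ᵥ v := by
  have hsplit : ∀ x, (X : 𝔽[X]) • (pencilK A κ P).map C *ᵥ x + (pencilL A κ P).map C *ᵥ x +
      (pencilM κ P).map C *ᵥ v = 0 ↔ shiftRows κ (X : 𝔽[X]) 1 *ᵥ x = 0 ∧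
        ((X : 𝔽[X]) • (constraintK A κ P).map C + (constraintL A κ P).map C) *ᵥ x =
          P.map C *ᵥ v := fun x => by
    rw [← Matrix.smul_mulVec, ← Matrix.add_mulVec, ← Matrix.fromCols_mulVec_sumElim,
      fromCols_pencil_eq_fromBlocks, Matrix.fromBlocks_mulVec, ← Sum.elim_zero_zero,
      Sum.elim_eq_iff]
    simp [Matrix.neg_mulVec, ← sub_eq_add_neg, sub_eq_zero]
  simp only [hsplit, shiftRows_mulVec_eq_zero_iff]
  constructor
  · rintro ⟨x, ⟨u, rfl⟩, hx⟩
    exact ⟨u, by rwa [constraint_mulVec_powers hA hP] at hx⟩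
  · rintro ⟨u, hu⟩
    exact ⟨_, ⟨u, rfl⟩, by rwa [constraint_mulVec_powers hA hP]⟩

theorem mem_span_iff_exists_mulVec [Fintype ν] [Fintype ι] (hA : ∀ a j, (A a j).natDegree ≤ κ j)
    (hPker : ∀ w, P *ᵥ w = 0 ↔ w ∈ Submodule.span 𝔽 (leadCoeffs A κ '' {j | κ j = 0}))
    (v : ν → 𝔽[X]) :
    v ∈ Submodule.span 𝔽[X] (Set.range Aᵀ) ↔ ∃ u, (P.map C * A) *ᵥ u = P.map C *ᵥ v := by
  constructor
  · rintro hv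
    obtain ⟨u, rfl⟩ := (Matrix.mem_span_range_transpose_iff A v).mp hv
    exact ⟨u, (Matrix.mulVec_mulVec _ _ _).symm⟩
  · rintro ⟨u, hu⟩
    set w := v - A *ᵥ u
    have hPw : P.map C *ᵥ w = 0 := by
      rw [Matrix.mulVec_sub, ← hu, Matrix.mulVec_mulVec, sub_self]
    have hcoeff : ∀ d, (fun i => (w i).coeff d) ∈
        Submodule.span 𝔽 (Set.range fun t : {j | κ j = 0} => leadCoeffs A κ t) := fun d => by
      rw [← Set.image_eq_range, ← hPker]
      funext r
      rw [← coeff_map_C_mulVec_apply, hPw, Pi.zero_apply, coeff_zero, Pi.zero_apply]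
    have hconst : Submodule.span 𝔽[X]
          (Set.range fun (t : {j | κ j = 0}) a => C (leadCoeffs A κ t a)) ≤
        Submodule.span 𝔽[X] (Set.range Aᵀ) := by
      refine Submodule.span_mono ?_
      rintro _ ⟨t, rfl⟩
      exact ⟨t, (map_C_leadCoeffs_eq_transpose hA t.2).symm⟩
    rw [show v = A *ᵥ u + w by simp [w]]
    exact add_mem ((Matrix.mem_span_range_transpose_iff A _).mpr ⟨u, rfl⟩)
      (hconst (mem_span_range_map_C_of_coeff_mem _ hcoeff))

theorem pencilK_mulVec_injective [Fintype ν] [Fintype ι] [DecidableEq ι]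
    (hlead : LinearIndependent 𝔽 (leadCoeffs A κ))
    (hPker : ∀ w, P *ᵥ w = 0 ↔ w ∈ Submodule.span 𝔽 (leadCoeffs A κ '' {j | κ j = 0})) :
    Function.Injective (pencilK A κ P).mulVec := by
  suffices h : ∀ x, pencilK A κ P *ᵥ x = 0 → x = 0 from fun x x' hx =>
    sub_eq_zero.mp (h _ (by rw [Matrix.mulVec_sub, hx, sub_self]))
  intro x hx
  rw [pencilK, Matrix.fromRows_mulVec, ← Sum.elim_zero_zero, Sum.elim_eq_iff] at hx
  obtain ⟨hshift, hcons⟩ := hx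
  have hlower : ∀ r, x (lowerState κ r) = 0 := fun r => by
    simpa [shiftRows_mulVec] using congrFun hshift r
  set y : ι → 𝔽 := fun j => ∑ d : Fin (κ j), if (d : ℕ) + 1 = κ j then x ⟨j, d⟩ else 0
  have hcons_eq : constraintK A κ P *ᵥ x = P *ᵥ ∑ j, y j • leadCoeffs A κ j := by
    simp only [Matrix.mulVec_sum, Matrix.mulVec_smul]
    funext r
    simp only [Finset.sum_apply, Pi.smul_apply, smul_eq_mul, Matrix.mulVec, dotProduct,
      Fintype.sum_sigma, y, Finset.sum_mul]
    refine Finset.sum_congr rfl fun j _ => Finset.sum_congr rfl fun d _ => ?_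
    split_ifs with h <;> simp [constraintK, h, Matrix.mul_apply, leadCoeffs, mul_comm]
  have hy : y = 0 := by
    refine hlead.eq_zero_of_sum_mem_span_image (fun j hj => ?_) ((hPker _).mp ?_)
    · exact Finset.sum_eq_zero fun d _ => absurd d.2 (by simp_all)
    · rw [← hcons_eq, hcons]
  funext ⟨j, d⟩
  by_cases hd : (d : ℕ) + 1 < κ j
  · exact hlower ⟨j, ⟨d, by omega⟩⟩
  · have hyj : (∑ d' : Fin (κ j), if (d' : ℕ) + 1 = κ j then x ⟨j, d'⟩ else 0) = 0 :=
      congrFun hy j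
    rwa [Finset.sum_eq_single d (fun d' _ hd' => if_neg fun h => hd' (Fin.ext (by omega)))
      (by simp), if_pos (by omega)] at hyj

theorem fromCols_pencilK_pencilM_mulVec_surjective [Fintype ν] [Fintype ι] [DecidableEq ι]
    (hP : Function.Surjective P.mulVec) :
    Function.Surjective (Matrix.fromCols (pencilK A κ P) (pencilM κ P)).mulVec := by
  rw [pencilK, pencilM, Matrix.fromCols_fromRows_eq_fromBlocks]
  exact Matrix.mulVec_surjective_fromBlocks_zero _ (shiftRows_one_zero_mulVec_surjective κ)
    (Matrix.mulVec_surjective_neg hP)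

theorem pencil_mulVec_surjective [Fintype ν] [Fintype ι] [DecidableEq ι] [Fintype m]
    [DecidableEq m] (hP : Function.Surjective P.mulVec) :
    Function.Surjective (Matrix.fromCols ((X : 𝔽[X]) • (pencilK A κ P).map C +
      (pencilL A κ P).map C) ((pencilM κ P).map C)).mulVec := by
  rw [fromCols_pencil_eq_fromBlocks]
  exact Matrix.mulVec_surjective_fromBlocks_zero _ (shiftRows_mulVec_surjective κ X)
    (Matrix.mulVec_surjective_neg (Matrix.mulVec_surjective_map C hP))

end Pencil

def IsFirstOrderRepresentation {𝔽 : Type} [Field 𝔽] {ρ ι ν : Type} [Fintype ρ] [Fintype ι]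
    [Fintype ν] [DecidableEq ρ] (C' : Submodule 𝔽[X] (ν → 𝔽[X])) (K L : Matrix ρ ι 𝔽)
    (M : Matrix ρ ν 𝔽) : Prop :=
  (C' : Set (ν → 𝔽[X])) =
      { v | ∃ x : ι → 𝔽[X], (X : 𝔽[X]) • (K.map C) *ᵥ x + (L.map C) *ᵥ x + (M.map C) *ᵥ v = 0 } ∧
    K.rank = Fintype.card ι ∧ (Matrix.fromCols K M).rank = Fintype.card ρ ∧
    LeftPrime (Matrix.fromCols ((X : 𝔽[X]) • K.map C + L.map C) (M.map C))

theorem IsFirstOrderRepresentation.reindex {𝔽 : Type} [Field 𝔽] {ρ ι ν ρ' ι' : Type} [Fintype ρ]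
    [Fintype ι] [Fintype ν] [DecidableEq ρ] [Fintype ρ'] [Fintype ι'] [DecidableEq ρ']
    {C' : Submodule 𝔽[X] (ν → 𝔽[X])} {K L : Matrix ρ ι 𝔽} {M : Matrix ρ ν 𝔽}
    (h : IsFirstOrderRepresentation C' K L M) (eρ : ρ ≃ ρ') (eι : ι ≃ ι') :
    IsFirstOrderRepresentation C' (Matrix.reindex eρ eι K) (Matrix.reindex eρ eι L)
      (Matrix.reindex eρ (Equiv.refl ν) M) := by
  obtain ⟨hC, hK, hKM, hprime⟩ := h
  have hcols : ∀ {R : Type} (K' : Matrix ρ ι R) (M' : Matrix ρ ν R),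
      Matrix.fromCols (Matrix.reindex eρ eι K') (Matrix.reindex eρ (Equiv.refl ν) M') =
        Matrix.reindex eρ (Equiv.sumCongr eι (Equiv.refl ν)) (Matrix.fromCols K' M') := by
    intro R K' M'
    ext i (j | j) <;> rfl
  refine ⟨?_, ?_, ?_, ?_⟩
  · have hsub : ∀ (x : ι' → 𝔽[X]) (v : ν → 𝔽[X]),
        (X : 𝔽[X]) • (Matrix.reindex eρ eι K).map C *ᵥ x + (Matrix.reindex eρ eι L).map C *ᵥ x +
          (Matrix.reindex eρ (Equiv.refl ν) M).map C *ᵥ v =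
        ((X : 𝔽[X]) • K.map C *ᵥ (x ∘ eι) + L.map C *ᵥ (x ∘ eι) + M.map C *ᵥ v) ∘ eρ.symm := by
      intro x v
      simp only [Matrix.reindex_apply, ← Matrix.submatrix_map, Matrix.submatrix_mulVec_equiv]
      rfl
    rw [hC]
    ext v
    simp only [Set.mem_ofPred_eq, hsub]
    constructor
    · rintro ⟨x, hx⟩
      exact ⟨x ∘ eι.symm, by simp [Function.comp_assoc, hx]⟩
    · rintro ⟨x, hx⟩
      exact ⟨x ∘ eι, funext fun r => by simpa [Function.comp_assoc] using congrFun hx (eρ r)⟩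
  · rw [Matrix.rank_reindex, hK, Fintype.card_congr eι]
  · rw [hcols, Matrix.rank_reindex, hKM, Fintype.card_congr eρ]
  · convert hprime.reindex eρ (Equiv.sumCongr eι (Equiv.refl ν)) using 1
    rw [← hcols]
    rfl

theorem isFirstOrderRepresentation_pencil {𝔽 : Type} [Field 𝔽] {ν ι m : Type} [Fintype ν]
    [Fintype ι] [DecidableEq ι] [Fintype m] [DecidableEq m] {A : Matrix ν ι 𝔽[X]} {κ : ι → ℕ}
    (hA : ∀ a j, (A a j).natDegree ≤ κ j) (hlead : LinearIndependent 𝔽 (leadCoeffs A κ))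
    {P : Matrix m ν 𝔽} (hP : Function.Surjective P.mulVec)
    (hPker : ∀ w, P *ᵥ w = 0 ↔ w ∈ Submodule.span 𝔽 (leadCoeffs A κ '' {j | κ j = 0})) :
    IsFirstOrderRepresentation (Submodule.span 𝔽[X] (Set.range Aᵀ))
      (pencilK A κ P) (pencilL A κ P) (pencilM κ P) := by
  have hP0 : ∀ j, κ j = 0 → ∀ r, (P * A.map (·.coeff 0)) r j = 0 := fun j hj r => by
    have hmem : leadCoeffs A κ j ∈ Submodule.span 𝔽 (leadCoeffs A κ '' {j | κ j = 0}) :=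
      Submodule.subset_span ⟨j, hj, rfl⟩
    simpa [leadCoeffs, hj, Matrix.mul_apply, Matrix.mulVec, dotProduct] using
      congrFun ((hPker _).mpr hmem) r
  refine ⟨Set.ext fun v => ?_,
    Matrix.rank_eq_card_of_injective (pencilK_mulVec_injective hlead hPker),
    Matrix.rank_eq_card_of_surjective (fromCols_pencilK_pencilM_mulVec_surjective hP),
    (Matrix.leftPrime_iff_mulVec_surjective _).mpr (pencil_mulVec_surjective hP)⟩
  rw [SetLike.mem_coe, mem_span_iff_exists_mulVec hA hPker]
  exact (pencil_solvable_iff hA hP0 v).symm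

theorem natDegree_le_colDeg {𝔽 : Type} [Field 𝔽] {n k : ℕ} (A : Matrix (Fin n) (Fin k) 𝔽[X])
    (a : Fin n) (j : Fin k) : (A a j).natDegree ≤ colDeg A j :=
  Finset.le_sup (f := fun a => (A a j).natDegree) (Finset.mem_univ a)

theorem ColumnReduced.linearIndependent_leadCoeffs {𝔽 : Type} [Field 𝔽] {n k : ℕ}
    {A : Matrix (Fin n) (Fin k) 𝔽[X]} (h : ColumnReduced A) :
    LinearIndependent 𝔽 (leadCoeffs A (colDeg A)) := by
  rw [ColumnReduced, Matrix.rank_eq_finrank_span_cols] at h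
  rw [linearIndependent_iff_card_eq_finrank_span, Fintype.card_fin]
  exact h.symm

theorem first_order_representation_code_general
    (𝔽 : Type) [Field 𝔽] (n k : ℕ)
    (G : Matrix (Fin n) (Fin k) (Polynomial 𝔽))
    (C : Submodule (Polynomial 𝔽) (Fin n → Polynomial 𝔽))
    (hC : C = Submodule.span (Polynomial 𝔽) (Set.range Gᵀ))
    -- the degree `δ` of `C`, computed from any column-reduced encoder
    (U : Matrix (Fin k) (Fin k) (Polynomial 𝔽)) (hU : IsUnit U)
    (hGU : ColumnReduced (G * U))
    (δ : ℕ) (hδ : δ = ∑ j : Fin k, colDeg (G * U) j) :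
    ∃ (K L : Matrix (Fin (δ + (n - k))) (Fin δ) 𝔽)
      (M : Matrix (Fin (δ + (n - k))) (Fin n) 𝔽),
      (C : Set (Fin n → Polynomial 𝔽)) =
        { v : Fin n → Polynomial 𝔽 | ∃ x : Fin δ → Polynomial 𝔽,
          (Polynomial.X : Polynomial 𝔽) •
              (K.map (fun a => (Polynomial.C a : Polynomial 𝔽))).mulVec x +
            (L.map (fun a => (Polynomial.C a : Polynomial 𝔽))).mulVec x +
            (M.map (fun a => (Polynomial.C a : Polynomial 𝔽))).mulVec v = 0 } ∧
      K.rank = δ ∧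
      (Matrix.fromCols K M).rank = δ + (n - k) ∧
      LeftPrime (Matrix.fromCols
        ((Polynomial.X : Polynomial 𝔽) • K.map (fun a => (Polynomial.C a : Polynomial 𝔽)) +
          L.map (fun a => (Polynomial.C a : Polynomial 𝔽)))
        (M.map (fun a => (Polynomial.C a : Polynomial 𝔽)))) := by
  set κ := colDeg (G * U)
  have hlead := hGU.linearIndependent_leadCoeffs
  have hkn : k ≤ n := by simpa using hlead.fintype_card_le_finrank
  have hW : Module.finrank 𝔽 (Submodule.span 𝔽 (leadCoeffs (G * U) κ '' {j | κ j = 0})) =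
      Fintype.card {j // κ j = 0} := by
    rw [Set.image_eq_range]
    exact finrank_span_eq_card (hlead.comp (Subtype.val : {j // κ j = 0} → Fin k)
      Subtype.val_injective)
  set W := Submodule.span 𝔽 (leadCoeffs (G * U) κ '' {j | κ j = 0})
  obtain ⟨P, hP, hPker⟩ := W.exists_mulVec_surjective_ker_eq
  have hrep := isFirstOrderRepresentation_pencil (natDegree_le_colDeg _) hlead hP hPker
  rw [Matrix.span_range_transpose_mul_of_isUnit G hU, ← hC] at hrep
  have hcardι : Fintype.card (Σ j, Fin (κ j)) = δ := by simp [hδ, κ]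
  have hcardρ :
      Fintype.card ((Σ j, Fin (κ j - 1)) ⊕ Fin (n - Module.finrank 𝔽 W)) = δ + (n - k) := by
    have hcount := Fintype.sum_sub_one_add_card κ
    have hzero := Fintype.card_subtype_le fun j => κ j = 0
    simp only [Fintype.card_sum, Fintype.card_sigma, Fintype.card_fin, hW] at hcount hzero ⊢
    omega
  obtain ⟨hset, hK, hKM, hprime⟩ :=
    hrep.reindex (Fintype.equivFinOfCardEq hcardρ) (Fintype.equivFinOfCardEq hcardι)
  exact ⟨_, _, _, hset, hK.trans (Fintype.card_fin δ), hKM.trans (Fintype.card_fin _), hprime⟩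

/-- Existence of first-order representations of finite-support codes: the column
module `C = colsp_{𝔽[z]} G(z) ⊆ 𝔽^n[z]` of degree `δ` admits a minimal first-order (pencil)
representation `zKx(z) + Lx(z) + Mv(z) = 0` by constant matrices `K, L, M`. -/
theorem first_order_representation_code
    (𝔽 : Type) [Field 𝔽] [Fintype 𝔽] (n k : ℕ)
    (G : Matrix (Fin n) (Fin k) (Polynomial 𝔽))
    (hG : LinearIndependent (Polynomial 𝔽) Gᵀ)
    (C : Submodule (Polynomial 𝔽) (Fin n → Polynomial 𝔽))
    (hC : C = Submodule.span (Polynomial 𝔽) (Set.range Gᵀ))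
    -- the degree `δ` of `C`, computed from any column-reduced encoder
    (U : Matrix (Fin k) (Fin k) (Polynomial 𝔽)) (hU : IsUnit U)
    (hGU : ColumnReduced (G * U))
    (δ : ℕ) (hδ : δ = ∑ j : Fin k, colDeg (G * U) j) :
    ∃ (K L : Matrix (Fin (δ + (n - k))) (Fin δ) 𝔽)
      (M : Matrix (Fin (δ + (n - k))) (Fin n) 𝔽),
      (C : Set (Fin n → Polynomial 𝔽)) =
        { v : Fin n → Polynomial 𝔽 | ∃ x : Fin δ → Polynomial 𝔽,
          (Polynomial.X : Polynomial 𝔽) •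
              (K.map (fun a => (Polynomial.C a : Polynomial 𝔽))).mulVec x +
            (L.map (fun a => (Polynomial.C a : Polynomial 𝔽))).mulVec x +
            (M.map (fun a => (Polynomial.C a : Polynomial 𝔽))).mulVec v = 0 } ∧
      K.rank = δ ∧
      (Matrix.fromCols K M).rank = δ + (n - k) ∧
      LeftPrime (Matrix.fromCols
        ((Polynomial.X : Polynomial 𝔽) • K.map (fun a => (Polynomial.C a : Polynomial 𝔽)) +
          L.map (fun a => (Polynomial.C a : Polynomial 𝔽)))
        (M.map (fun a => (Polynomial.C a : Polynomial 𝔽)))) :=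
  first_order_representation_code_general 𝔽 n k G C hC U hU hGU δ hδ
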